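/- Let K be a subsemiheap of the extended bicyclic semigroup with K ⊆ K_{α₀,β₀}, containing a_{α₀β₀} and a point a_{α₀, β₀+p} with p ≥ 1. Then K contains a_{α₀+p, β₀}; in particular Case 2.1 (where the first column contains only a_{α₀β₀}) does not occur. -/

import Mathlib

/-- The extended bicyclic semigroup: pairs of integers with this product. -/
def emul (a b : ℤ × ℤ) : ℤ × ℤ :=
  (a.1 + b.1 - min a.2 b.1, a.2 + b.2 - min a.2 b.1)

/-- The involution (i,j)* = (j,i). -/
def estar (a : ℤ × ℤ) : ℤ × ℤ := (a.2, a.1)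

/-- The triple product x y* z. -/
def tri (x y z : ℤ × ℤ) : ℤ × ℤ := emul (emul x (estar y)) z

/-- A subsemiheap: a subset closed under the triple product x y* z. -/
def IsSubsemiheap (K : Set (ℤ × ℤ)) : Prop :=
  ∀ x ∈ K, ∀ y ∈ K, ∀ z ∈ K, tri x y z ∈ K


lemma emul_of_le {a b : ℤ × ℤ} (h : a.2 ≤ b.1) : emul a b = (a.1 + b.1 - a.2, b.2) := by
  simp only [emul, min_eq_left h]
  ext <;> simp

lemma emul_of_ge {a b : ℤ × ℤ} (h : b.1 ≤ a.2) : emul a b = (a.1, a.2 + b.2 - b.1) := by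
  simp only [emul, min_eq_right h]
  ext <;> simp

lemma tri_shift_row {i j p : ℤ} (hp : 0 ≤ p) : tri (i, j) (i, j + p) (i, j) = (i + p, j) := by
  have hmid : emul (i, j) (estar (i, j + p)) = (i + p, i) := by
    rw [estar, emul_of_le (by simpa using hp)]
    exact Prod.ext (by dsimp only; ring) rfl
  rw [tri, hmid, emul_of_ge le_rfl]
  exact Prod.ext rfl (by dsimp only; ring)

theorem stmt16_general (K : Set (ℤ × ℤ)) (hK : IsSubsemiheap K) (α₀ β₀ : ℤ)
    (hmem : ((α₀, β₀) : ℤ × ℤ) ∈ K)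
    (p : ℤ) (hp : 1 ≤ p) (hrow : ((α₀, β₀ + p) : ℤ × ℤ) ∈ K) :
    ((α₀ + p, β₀) : ℤ × ℤ) ∈ K := by
  simpa only [tri_shift_row (by omega : 0 ≤ p)] using hK _ hmem _ hrow _ hmem

theorem stmt16 (K : Set (ℤ × ℤ)) (hK : IsSubsemiheap K) (α₀ β₀ : ℤ)
    (hsub : K ⊆ {x : ℤ × ℤ | α₀ ≤ x.1 ∧ β₀ ≤ x.2})
    (hmem : ((α₀, β₀) : ℤ × ℤ) ∈ K)
    (p : ℤ) (hp : 1 ≤ p) (hrow : ((α₀, β₀ + p) : ℤ × ℤ) ∈ K) :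
    ((α₀ + p, β₀) : ℤ × ℤ) ∈ K :=
  stmt16_general K hK α₀ β₀ hmem p hp hrow
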